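/- arXiv:1105.2604 — 6 statements merged into one kernel-verified Lean document; each statement's English description precedes it below -/
import Mathlib

section
/- Let h be a real random variable with E[e^{2|h|}] < 1/(max_{β≥0} β/cosh²β). Then for every β ≥ 0, β·E[1/cosh²(β+h)] < 1. -/
open MeasureTheory

lemma cosh_lower (β x : ℝ) (hβ : 0 ≤ β) :
    Real.exp (-|x|) * Real.cosh β ≤ Real.cosh (β + x) := by
  have h1 : Real.cosh (β + x) = Real.cosh β * Real.cosh x + Real.sinh β * Real.sinh x :=
    Real.cosh_add β x
  have h2 : Real.exp (-|x|) = Real.cosh x - |Real.sinh x| := by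
    rw [Real.abs_sinh, ← Real.cosh_abs, ← Real.cosh_sub_sinh]
  have h3 : Real.sinh β ≤ Real.cosh β := by
    nlinarith [Real.cosh_sub_sinh β, Real.exp_pos (-β)]
  have h4 : 0 ≤ Real.sinh β := Real.sinh_nonneg_iff.mpr hβ
  have h5 : Real.sinh β * Real.sinh x ≥ -(Real.sinh β * |Real.sinh x|) := by
    nlinarith [neg_abs_le (Real.sinh x), abs_nonneg (Real.sinh x)]
  nlinarith [abs_nonneg (Real.sinh x)]

lemma inv_cosh_sq_le (β x : ℝ) (hβ : 0 ≤ β) :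
    1 / Real.cosh (β + x) ^ 2 ≤ Real.exp (2 * |x|) / Real.cosh β ^ 2 := by
  have hc := Real.cosh_pos (β + x)
  have hcb := Real.cosh_pos β
  have hl := cosh_lower β x hβ
  have he : Real.exp (2 * |x|) * Real.exp (-|x|) ^ 2 = 1 := by
    rw [← Real.exp_nat_mul, ← Real.exp_add]; norm_num
  have hep := Real.exp_pos (-|x|)
  rw [div_le_div_iff₀ (by positivity) (by positivity)]
  have h6 : (Real.exp (-|x|) * Real.cosh β) ^ 2 ≤ Real.cosh (β + x) ^ 2 :=
    pow_le_pow_left₀ (by positivity) hl 2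
  have h7 := mul_le_mul_of_nonneg_left h6 (Real.exp_nonneg (2 * |x|))
  nlinarith [Real.exp_pos (2 * |x|)]

theorem beta_expectation_inv_cosh_sq_lt_one
    {Ω : Type*} [MeasureSpace Ω] [IsProbabilityMeasure (volume : Measure Ω)]
    (h : Ω → ℝ) (hmeas : Measurable h)
    (hint : Integrable (fun ω => Real.exp (2 * |h ω|)))
    (hsmall : ∫ ω, Real.exp (2 * |h ω|) <
      1 / sSup ((fun β => β / Real.cosh β ^ 2) '' Set.Ici (0 : ℝ))) :
    ∀ β : ℝ, 0 ≤ β → β * ∫ ω, 1 / Real.cosh (β + h ω) ^ 2 < 1 := by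
  set S := sSup ((fun β => β / Real.cosh β ^ 2) '' Set.Ici (0 : ℝ)) with hS
  have hbdd : BddAbove ((fun β => β / Real.cosh β ^ 2) '' Set.Ici (0 : ℝ)) := by
    refine ⟨1, ?_⟩
    rintro y ⟨β, hβ, rfl⟩
    have hβ0 : (0:ℝ) ≤ β := hβ
    have hc : 0 < Real.cosh β ^ 2 := by positivity
    rw [div_le_one hc]
    have hs : β ≤ Real.sinh β := Real.self_le_sinh_iff.mpr hβ0
    have := Real.cosh_sq β
    nlinarith [sq_nonneg (Real.sinh β - 1), Real.sinh_nonneg_iff.mpr hβ0]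
  have hSpos : 0 < S := by
    have hmem : (1:ℝ) / Real.cosh 1 ^ 2 ∈
        ((fun β => β / Real.cosh β ^ 2) '' Set.Ici (0 : ℝ)) :=
      ⟨1, by norm_num, rfl⟩
    have := le_csSup hbdd hmem
    have : (0:ℝ) < 1 / Real.cosh 1 ^ 2 := by positivity
    linarith [le_csSup hbdd hmem]
  intro β hβ
  set E := ∫ ω, Real.exp (2 * |h ω|) with hE
  have hE1 : (1:ℝ) ≤ E := by
    calc (1:ℝ) = ∫ _ω : Ω, (1:ℝ) := by simp
    _ ≤ E := by
      apply integral_mono (integrable_const 1) hint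
      intro ω
      simpa using Real.one_le_exp (by positivity)
  have hcb : 0 < Real.cosh β := Real.cosh_pos β
  -- integrability of the integrand
  have hmeas2 : Measurable fun ω => 1 / Real.cosh (β + h ω) ^ 2 := by
    apply Measurable.div measurable_const
    exact ((Real.measurable_cosh.comp (measurable_const.add hmeas)).pow_const 2)
  have hint2 : Integrable (fun ω => 1 / Real.cosh (β + h ω) ^ 2) := by
    apply hint.mono hmeas2.aestronglyMeasurable
    filter_upwards with ω
    have hc := Real.cosh_pos (β + h ω)
    have h1 : 1 ≤ Real.cosh (β + h ω) ^ 2 := by nlinarith [Real.one_le_cosh (β + h ω)]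
    rw [Real.norm_eq_abs, Real.norm_eq_abs, abs_of_nonneg (by positivity),
      abs_of_nonneg (Real.exp_nonneg _)]
    calc 1 / Real.cosh (β + h ω) ^ 2 ≤ 1 := by rw [div_le_one (by positivity)]; exact h1
    _ ≤ Real.exp (2 * |h ω|) := Real.one_le_exp (by positivity)
  have hIle : (∫ ω, 1 / Real.cosh (β + h ω) ^ 2) ≤ E / Real.cosh β ^ 2 := by
    have : (∫ ω, 1 / Real.cosh (β + h ω) ^ 2) ≤
        ∫ ω, Real.exp (2 * |h ω|) / Real.cosh β ^ 2 := by
      apply integral_mono hint2 (hint.div_const _)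
      intro ω
      exact inv_cosh_sq_le β (h ω) hβ
    simpa [integral_div] using this
  have hcS : β / Real.cosh β ^ 2 ≤ S :=
    le_csSup hbdd ⟨β, hβ, rfl⟩
  have hSE : S * E < 1 := by
    have := (lt_div_iff₀ hSpos).mp hsmall
    linarith [mul_comm S E ▸ this]
  calc β * ∫ ω, 1 / Real.cosh (β + h ω) ^ 2
      ≤ β * (E / Real.cosh β ^ 2) := by
        apply mul_le_mul_of_nonneg_left hIle hβ
    _ = (β / Real.cosh β ^ 2) * E := by ring
    _ ≤ S * E := by
        apply mul_le_mul_of_nonneg_right hcS (by linarith)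
    _ < 1 := hSE
end

section
/- Let {g_n} be a sequence of differentiable convex functions on an open interval I converging pointwise to g. If g is differentiable at a point x ∈ I, then g_n'(x) → g'(x). -/
/-!
For a convex function, the slope of a chord to the left of `x` is at most the derivative at `x`,
and the slope of a chord to the right is at least it. Chord slopes of `g n` converge to chord
slopes of the limit, and since the limit is differentiable at `x`, chords on both sides with slopes
arbitrarily close to its derivative can be chosen; this squeezes `(g n)'(x)`.
-/

open Filter Set Topology

section

variable {ι : Type*} {l : Filter ι} {f : ι → ℝ → ℝ} {F : ℝ → ℝ} {S : Set ℝ} {x : ℝ}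

theorem tendsto_slope_of_tendsto {y : ℝ} (hx : Tendsto (fun i => f i x) l (𝓝 (F x)))
    (hy : Tendsto (fun i => f i y) l (𝓝 (F y))) :
    Tendsto (fun i => slope (f i) x y) l (𝓝 (slope F x y)) := by
  simp only [slope_def_field]
  exact (hy.sub hx).div_const (y - x)

variable (hconv : ∀ i, ConvexOn ℝ S (f i)) (hdiff : ∀ i, DifferentiableAt ℝ (f i) x)
  (hlim : ∀ y ∈ S, Tendsto (fun i => f i y) l (𝓝 (F y)))
include hconv hdiff hlim

theorem ConvexOn.eventually_lt_deriv_of_tendsto {F' c : ℝ} (hx : x ∈ S) (hS : S ∈ 𝓝[<] x)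
    (hF : HasDerivWithinAt F F' (Iio x) x) (hc : c < F') :
    ∀ᶠ i in l, c < deriv (f i) x := by
  have hslope : Tendsto (slope F x) (𝓝[<] x) (𝓝 F') :=
    (hasDerivWithinAt_iff_tendsto_slope' (lt_irrefl x : x ∉ _)).mp hF
  obtain ⟨y, hcy, hyS, hyx⟩ :=
    ((hslope.eventually (eventually_gt_nhds hc)).and
      (Eventually.and hS self_mem_nhdsWithin)).exists
  filter_upwards [(tendsto_slope_of_tendsto (hlim x hx) (hlim y hyS)).eventually
    (eventually_gt_nhds hcy)] with i hi
  calc c < slope (f i) x y := hi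
    _ = slope (f i) y x := slope_comm _ _ _
    _ ≤ deriv (f i) x := (hconv i).slope_le_deriv hyS hx hyx (hdiff i)

theorem ConvexOn.eventually_deriv_lt_of_tendsto {F' c : ℝ} (hx : x ∈ S) (hS : S ∈ 𝓝[>] x)
    (hF : HasDerivWithinAt F F' (Ioi x) x) (hc : F' < c) :
    ∀ᶠ i in l, deriv (f i) x < c := by
  have hslope : Tendsto (slope F x) (𝓝[>] x) (𝓝 F') :=
    (hasDerivWithinAt_iff_tendsto_slope' (lt_irrefl x : x ∉ _)).mp hF
  obtain ⟨y, hcy, hyS, hxy⟩ :=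
    ((hslope.eventually (eventually_lt_nhds hc)).and
      (Eventually.and hS self_mem_nhdsWithin)).exists
  filter_upwards [(tendsto_slope_of_tendsto (hlim x hx) (hlim y hyS)).eventually
    (eventually_lt_nhds hcy)] with i hi
  exact ((hconv i).deriv_le_slope hx hyS hxy (hdiff i)).trans_lt hi

theorem ConvexOn.tendsto_deriv_of_tendsto {F' : ℝ} (hS : S ∈ 𝓝 x) (hF : HasDerivAt F F' x) :
    Tendsto (fun i => deriv (f i) x) l (𝓝 F') :=
  tendsto_order.2
    ⟨fun _ hc => ConvexOn.eventually_lt_deriv_of_tendsto hconv hdiff hlim (mem_of_mem_nhds hS)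
      (mem_nhdsWithin_of_mem_nhds hS) hF.hasDerivWithinAt hc,
     fun _ hc => ConvexOn.eventually_deriv_lt_of_tendsto hconv hdiff hlim (mem_of_mem_nhds hS)
      (mem_nhdsWithin_of_mem_nhds hS) hF.hasDerivWithinAt hc⟩

end

theorem griffith_lemma (a b : ℝ) (g : ℕ → ℝ → ℝ) (glim : ℝ → ℝ)
    (hconv : ∀ n, ConvexOn ℝ (Set.Ioo a b) (g n))
    (hdiff : ∀ n, DifferentiableOn ℝ (g n) (Set.Ioo a b))
    (hlim : ∀ y ∈ Set.Ioo a b, Tendsto (fun n => g n y) atTop (nhds (glim y)))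
    (x : ℝ) (hx : x ∈ Set.Ioo a b) (hg : DifferentiableAt ℝ glim x) :
    Tendsto (fun n => deriv (g n) x) atTop (nhds (deriv glim x)) :=
  have hI : Ioo a b ∈ 𝓝 x := Ioo_mem_nhds hx.1 hx.2
  ConvexOn.tendsto_deriv_of_tendsto hconv (fun n => (hdiff n).differentiableAt hI) hlim hI
    hg.hasDerivAt
end

section
/- Let I₁ ⊆ ℝ be an open interval and I₂ ⊆ ℝ a compact interval, and let g : I₁ × I₂ → ℝ be continuous such that g(·,y) is convex and ∂g/∂x exists for every (x,y). Define G(x) = max_{y ∈ I₂} g(x,y) and let Ω(x) be the set of maximizers. Then the one-sided derivatives of G satisfy (dG/dx+)(x) = max_{y ∈ Ω(x)} ∂g/∂x(x,y) and (dG/dx−)(x) = min_{y ∈ Ω(x)} ∂g/∂x(x,y). In particular, if Ω(x) is a singleton then G is differentiable at x. -/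
/-!
Write `M w = sup_{y ∈ K} g w y`. For a maximizer `y` at `x`, the secant of `M` from `x` to
`w > x` dominates the secant of `g(·, y)`, hence, by convexity, `g' y`; this gives the lower
bound. For the upper bound, suppose the secants of `M` stay `≥ l` along some `w → x⁺`. Choose
maximizers `y_w` at `w` and, by compactness, a cluster point `y₀`; joint continuity makes `y₀` a
maximizer at `x`. The secant of `M` at `w` is at most that of `g(·, y_w)`, and secants of a
convex function from `x` increase with the other endpoint, so every secant of `g(·, y₀)` from
`x` is `≥ l`, whence `g' y₀ ≥ l`. The left derivative follows by reflecting `x ↦ -x`.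
-/

open Set Filter Topology

theorem IsMaxOn.csSup_image_eq {β γ : Type*} [ConditionallyCompleteLattice γ] {f : β → γ}
    {K : Set β} {y : β} (hy : y ∈ K) (h : IsMaxOn f K y) : sSup (f '' K) = f y :=
  (h.isLUB hy).csSup_eq ⟨f y, mem_image_of_mem f hy⟩

theorem IsCompact.exists_tendsto_of_frequently_mem {ι X : Type*} [TopologicalSpace X]
    {K : Set X} (hK : IsCompact K) {F : Filter ι} {u : ι → X} (hu : ∃ᶠ i in F, u i ∈ K) :
    ∃ x ∈ K, ∃ L ≤ F, L.NeBot ∧ Tendsto u L (𝓝 x) := by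
  obtain ⟨x, hxK, hx⟩ := hK.exists_mapClusterPt_of_frequently hu
  refine ⟨x, hxK, comap u (𝓝 x) ⊓ F, inf_le_right, ?_, tendsto_comap.mono_left inf_le_left⟩
  rw [← map_neBot_iff u, Filter.push_pull']
  exact hx

section ArgmaxGraph

variable {α β : Type*} [TopologicalSpace α] [TopologicalSpace β] {g : α → β → ℝ}
  {U : Set α} {K : Set β}

theorem IsMaxOn.of_tendsto {ι : Type*} {l : Filter ι} [l.NeBot] {w : ι → α} {y : ι → β}
    {x : α} {y₀ : β} (hcont : ContinuousOn (fun p : α × β => g p.1 p.2) (U ×ˢ K))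
    (hx : x ∈ U) (hy₀ : y₀ ∈ K) (hw : Tendsto w l (𝓝 x)) (hy : Tendsto y l (𝓝 y₀))
    (hmax : ∀ᶠ i in l, w i ∈ U ∧ y i ∈ K ∧ IsMaxOn (g (w i)) K (y i)) :
    IsMaxOn (g x) K y₀ := by
  have hlim {v : ι → β} {v₀ : β} (hv₀ : v₀ ∈ K) (hv : Tendsto v l (𝓝 v₀))
      (hvK : ∀ᶠ i in l, w i ∈ U ∧ v i ∈ K) :
      Tendsto (fun i => g (w i) (v i)) l (𝓝 (g x v₀)) :=
    (hcont (x, v₀) ⟨hx, hv₀⟩).tendsto.comp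
      (tendsto_nhdsWithin_iff.2 ⟨hw.prodMk_nhds hv, hvK⟩)
  refine isMaxOn_iff.2 fun z hz => le_of_tendsto_of_tendsto
    (hlim hz tendsto_const_nhds (hmax.mono fun i hi => ⟨hi.1, hz⟩))
    (hlim hy₀ hy (hmax.mono fun i hi => ⟨hi.1, hi.2.1⟩)) ?_
  exact hmax.mono fun i hi => isMaxOn_iff.1 hi.2.2 z hz

theorem IsCompact.exists_isMaxOn_selection (hK : IsCompact K) (hKne : K.Nonempty)
    (hcont : ContinuousOn (fun p : α × β => g p.1 p.2) (U ×ˢ K)) :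
    ∃ y : α → β, ∀ w, y w ∈ K ∧ (w ∈ U → IsMaxOn (g w) K (y w)) := by
  have (w : α) : ∃ y, y ∈ K ∧ (w ∈ U → IsMaxOn (g w) K y) := by
    by_cases hw : w ∈ U
    · exact (hK.exists_isMaxOn hKne (hcont.uncurry_left w hw)).imp
        fun _ hy => ⟨hy.1, fun _ => hy.2⟩
    · exact hKne.imp fun _ hy => ⟨hy, fun h => absurd h hw⟩
  exact ⟨fun w => (this w).choose, fun w => (this w).choose_spec⟩

end ArgmaxGraph

section Slope

variable {β : Type*} {K : Set β} {g : ℝ → β → ℝ} {x w : ℝ} {y : β}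

theorem slope_le_slope_sSup_image (hxw : x < w) (hy : y ∈ K) (hmax : IsMaxOn (g x) K y)
    (hbdd : BddAbove (g w '' K)) : slope (g · y) x w ≤ slope (fun v => sSup (g v '' K)) x w := by
  rw [slope_def_field, slope_def_field, hmax.csSup_image_eq hy]
  exact div_le_div_of_nonneg_right (by linarith [le_csSup hbdd (mem_image_of_mem _ hy)])
    (sub_nonneg.2 hxw.le)

theorem slope_sSup_image_le_slope (hxw : x < w) (hbdd : BddAbove (g x '' K)) (hy : y ∈ K)
    (hmax : IsMaxOn (g w) K y) : slope (fun v => sSup (g v '' K)) x w ≤ slope (g · y) x w := by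
  rw [slope_def_field, slope_def_field, hmax.csSup_image_eq hy]
  exact div_le_div_of_nonneg_right (by linarith [le_csSup hbdd (mem_image_of_mem _ hy)])
    (sub_nonneg.2 hxw.le)

end Slope

section Danskin

variable {β : Type*} [TopologicalSpace β] {K : Set β} {U : Set ℝ} {g : ℝ → β → ℝ}
  {g' : β → ℝ} {x : ℝ}

theorem eventually_slope_sSup_image_lt (hK : IsCompact K) (hKne : K.Nonempty) (hU : U ∈ 𝓝 x)
    (hcont : ContinuousOn (fun p : ℝ × β => g p.1 p.2) (U ×ˢ K))
    (hconv : ∀ y ∈ K, ConvexOn ℝ U (g · y))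
    (hderiv : ∀ y ∈ K, HasDerivWithinAt (g · y) (g' y) (Ioi x) x) {l : ℝ}
    (hl : ∀ y ∈ K, IsMaxOn (g x) K y → g' y < l) :
    ∀ᶠ w in 𝓝[>] x, slope (fun v => sSup (g v '' K)) x w < l := by
  have hx : x ∈ U := mem_of_mem_nhds hU
  have hright : ∀ᶠ w in 𝓝[>] x, w ∈ U ∧ x < w :=
    Eventually.and (nhdsWithin_le_nhds hU) self_mem_nhdsWithin
  obtain ⟨y, hy⟩ := hK.exists_isMaxOn_selection hKne hcont
  choose hyK hymax using hy
  by_contra hfreq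
  have := frequently_iff_neBot.1 (not_eventually.1 hfreq)
  obtain ⟨y₀, hy₀K, L, hLF, hL, hLy⟩ := hK.exists_tendsto_of_frequently_mem
    (F := 𝓝[>] x ⊓ 𝓟 {w | ¬ slope (fun v => sSup (g v '' K)) x w < l})
    (Frequently.of_forall hyK)
  have hLx : L ≤ 𝓝[>] x := hLF.trans inf_le_left
  have hLslope : ∀ᶠ w in L, l ≤ slope (fun v => sSup (g v '' K)) x w :=
    Eventually.mono (hLF.trans inf_le_right (mem_principal_self _)) fun _ => not_lt.1
  have hy₀max : IsMaxOn (g x) K y₀ :=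
    IsMaxOn.of_tendsto hcont hx hy₀K (tendsto_id.mono_left (hLx.trans nhdsWithin_le_nhds)) hLy
      (Eventually.mono (hLx hright) fun w hw => ⟨hw.1, hyK w, hymax w hw.1⟩)
  have hsecant : ∀ u ∈ U, x < u → l ≤ slope (g · y₀) x u := by
    intro u hu hxu
    have hcontK {v : ℝ} (hv : v ∈ U) : Tendsto (fun w => g v (y w)) L (𝓝 (g v y₀)) :=
      (hcont.uncurry_left v hv y₀ hy₀K).tendsto.comp
        (tendsto_nhdsWithin_iff.2 ⟨hLy, Eventually.of_forall hyK⟩)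
    have hlim : Tendsto (fun w => slope (g · (y w)) x u) L (𝓝 (slope (g · y₀) x u)) := by
      simp only [slope_def_field]
      exact ((hcontK hu).sub (hcontK hx)).div_const _
    refine ge_of_tendsto hlim ?_
    filter_upwards [hLx hright, hLx (Ioo_mem_nhdsGT hxu), hLslope] with w ⟨hwU, hxw⟩ hwu hlw
    calc l ≤ slope (fun v => sSup (g v '' K)) x w := hlw
      _ ≤ slope (g · (y w)) x w :=
        slope_sSup_image_le_slope hxw (hK.bddAbove_image (hcont.uncurry_left x hx)) (hyK w)
          (hymax w hwU)
      _ ≤ slope (g · (y w)) x u :=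
        (hconv _ (hyK w)).slope_mono hx ⟨hwU, hxw.ne'⟩ ⟨hu, hxu.ne'⟩ hwu.2.le
  have : l ≤ g' y₀ := ge_of_tendsto
    ((hasDerivWithinAt_iff_tendsto_slope' self_notMem_Ioi).1 (hderiv y₀ hy₀K))
    (hright.mono fun u hu => hsecant u hu.1 hu.2)
  exact (hl y₀ hy₀K hy₀max).not_ge this

theorem hasDerivWithinAt_sSup_image_Ioi (hK : IsCompact K) (hKne : K.Nonempty) (hU : U ∈ 𝓝 x)
    (hcont : ContinuousOn (fun p : ℝ × β => g p.1 p.2) (U ×ˢ K))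
    (hconv : ∀ y ∈ K, ConvexOn ℝ U (g · y))
    (hderiv : ∀ y ∈ K, HasDerivWithinAt (g · y) (g' y) (Ioi x) x) :
    HasDerivWithinAt (fun w => sSup (g w '' K)) (sSup (g' '' {y ∈ K | IsMaxOn (g x) K y}))
      (Ioi x) x := by
  have hx : x ∈ U := mem_of_mem_nhds hU
  have hright : ∀ᶠ w in 𝓝[>] x, w ∈ U ∧ x < w :=
    Eventually.and (nhdsWithin_le_nhds hU) self_mem_nhdsWithin
  have hlower : ∀ y ∈ {y ∈ K | IsMaxOn (g x) K y}, ∀ w ∈ U, x < w →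
      g' y ≤ slope (fun v => sSup (g v '' K)) x w := fun y ⟨hy, hmax⟩ w hw hxw =>
    ((hconv y hy).le_slope_of_hasDerivWithinAt_Ioi hx hw hxw (hderiv y hy)).trans
      (slope_le_slope_sSup_image hxw hy hmax (hK.bddAbove_image (hcont.uncurry_left w hw)))
  obtain ⟨y₀, hy₀, hmax₀⟩ := hK.exists_isMaxOn hKne (hcont.uncurry_left x hx)
  obtain ⟨w₀, hw₀, hxw₀⟩ := hright.exists
  have hbdd : BddAbove (g' '' {y ∈ K | IsMaxOn (g x) K y}) :=
    ⟨_, forall_mem_image.2 fun y hy => hlower y hy w₀ hw₀ hxw₀⟩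
  rw [hasDerivWithinAt_iff_tendsto_slope' self_notMem_Ioi, tendsto_order]
  refine ⟨fun l hl => ?_, fun l hl => eventually_slope_sSup_image_lt hK hKne hU hcont hconv hderiv
    fun y hy hmax => (le_csSup hbdd (mem_image_of_mem g' ⟨hy, hmax⟩)).trans_lt hl⟩
  filter_upwards [hright] with w ⟨hw, hxw⟩
  exact hl.trans_le <| csSup_le ⟨_, mem_image_of_mem g' ⟨hy₀, hmax₀⟩⟩ <|
    forall_mem_image.2 fun y hy => hlower y hy w hw hxw

theorem hasDerivWithinAt_sSup_image_Iio (hK : IsCompact K) (hKne : K.Nonempty) (hU : U ∈ 𝓝 x)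
    (hcont : ContinuousOn (fun p : ℝ × β => g p.1 p.2) (U ×ˢ K))
    (hconv : ∀ y ∈ K, ConvexOn ℝ U (g · y))
    (hderiv : ∀ y ∈ K, HasDerivWithinAt (g · y) (g' y) (Iio x) x) :
    HasDerivWithinAt (fun w => sSup (g w '' K)) (sInf (g' '' {y ∈ K | IsMaxOn (g x) K y}))
      (Iio x) x := by
  have hreflect := hasDerivWithinAt_sSup_image_Ioi (g := fun u => g (-u)) (g' := fun y => -g' y)
    (U := -U) (x := -x) hK hKne ?_ ?_ ?_ ?_
  · have := hreflect.comp (s := Iio x) x (hasDerivAt_neg x).hasDerivWithinAt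
      fun w hw => show -x < -w from neg_lt_neg hw
    simp only [Function.comp_def, neg_neg] at this
    rwa [mul_neg_one, ← image_image Neg.neg g', image_neg_eq_neg, ← Real.sInf_def] at this
  · exact continuous_neg.continuousAt.preimage_mem_nhds (by rwa [neg_neg])
  · exact hcont.comp (f := fun p : ℝ × β => (-p.1, p.2)) (by fun_prop) fun p hp => hp
  · exact fun y hy => (hconv y hy).comp_linearMap (-LinearMap.id)
  · intro y hy
    simpa [Function.comp_def] using (hderiv y hy).comp_of_eq (s := Ioi (-x)) (-x)
      (hasDerivAt_neg (-x)).hasDerivWithinAt (fun w hw => show -w < x from neg_lt.1 hw)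
      (neg_neg x).symm

end Danskin

theorem danskin (a b c d : ℝ) (hcd : c ≤ d)
    (g g' : ℝ → ℝ → ℝ)
    (hcont : ContinuousOn (fun p : ℝ × ℝ => g p.1 p.2) (Set.Ioo a b ×ˢ Set.Icc c d))
    (hconv : ∀ y ∈ Set.Icc c d, ConvexOn ℝ (Set.Ioo a b) (fun x => g x y))
    (hderiv : ∀ x ∈ Set.Ioo a b, ∀ y ∈ Set.Icc c d,
      HasDerivAt (fun x' => g x' y) (g' x y) x)
    (G : ℝ → ℝ) (hG : ∀ x, G x = sSup (g x '' Set.Icc c d))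
    (Om : ℝ → Set ℝ)
    (hOm : ∀ x, Om x = {y ∈ Set.Icc c d | ∀ z ∈ Set.Icc c d, g x z ≤ g x y}) :
    ∀ x ∈ Set.Ioo a b,
      HasDerivWithinAt G (sSup (g' x '' Om x)) (Set.Ici x) x ∧
      HasDerivWithinAt G (sInf (g' x '' Om x)) (Set.Iic x) x ∧
      ∀ y₀, Om x = {y₀} → HasDerivAt G (g' x y₀) x := by
  intro x hx
  obtain rfl : G = fun w => sSup (g w '' Icc c d) := funext hG
  have hU : Ioo a b ∈ 𝓝 x := isOpen_Ioo.mem_nhds hx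
  have hright := hasDerivWithinAt_sSup_image_Ioi isCompact_Icc (nonempty_Icc.2 hcd) hU hcont
    hconv fun y hy => (hderiv x hx y hy).hasDerivWithinAt
  have hleft := hasDerivWithinAt_sSup_image_Iio isCompact_Icc (nonempty_Icc.2 hcd) hU hcont
    hconv fun y hy => (hderiv x hx y hy).hasDerivWithinAt
  have hΩ : Om x = {y ∈ Icc c d | IsMaxOn (g x) (Icc c d) y} := hOm x
  rw [hΩ]
  refine ⟨hright.Ici_of_Ioi, hleft.Iic_of_Iio, fun y₀ hy₀ => ?_⟩
  rw [hy₀, image_singleton, csSup_singleton] at hright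
  rw [hy₀, image_singleton, csInf_singleton] at hleft
  exact hasDerivAt_iff_tendsto_slope_left_right.2
    ⟨(hasDerivWithinAt_iff_tendsto_slope' self_notMem_Iio).1 hleft,
      (hasDerivWithinAt_iff_tendsto_slope' self_notMem_Ioi).1 hright⟩
end

section
/- Let φ : ℝ → ℝ be a bounded, increasing, odd C² function with φ''(y) < 0 for y > 0. Then for every μ ≥ 0 and every centered Gaussian random variable z, E[φ(z+μ)·φ'(z+μ)] ≥ 0. -/
/-!
Shifting by `μ`, the expectation is `∫ f dN(μ, v)` for the odd function `f = φ φ'`, which is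
nonnegative on `[0, ∞)` because `φ` is odd and increasing. Pairing `x` with `-x`, the integral
equals half of `∫ f(x) (p(x) - p(-x)) dx`, where `p` is the density of `N(μ, v)`; for `μ ≥ 0` the
point `x` is at least as close to `μ` as `-x` exactly when `x ≥ 0`, so the integrand is
nonnegative.
-/

open MeasureTheory ProbabilityTheory

lemma Function.Odd.deriv_even {𝕜 F : Type*} [NontriviallyNormedField 𝕜] [NormedAddCommGroup F]
    [NormedSpace 𝕜 F] {f : 𝕜 → F} (hf : f.Odd) : (deriv f).Even := by
  intro x
  have hf' : (fun y ↦ -f (-y)) = f := funext fun y ↦ by rw [hf, neg_neg]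
  rw [← hf', deriv.fun_neg, deriv_comp_neg, neg_neg, neg_neg, hf']

lemma integral_nonneg_of_forall_add_comp_neg_nonneg {G : Type*} [MeasurableSpace G] [AddGroup G]
    [MeasurableNeg G] {μ : Measure G} [μ.IsNegInvariant] {g : G → ℝ}
    (hg : ∀ x, 0 ≤ g x + g (-x)) : 0 ≤ ∫ x, g x ∂μ := by
  by_cases hint : Integrable g μ
  · have hsum : 0 ≤ ∫ x, (g x + g (-x)) ∂μ := integral_nonneg hg
    rw [integral_add hint hint.comp_neg, integral_neg_eq_self] at hsum
    linarith
  · rw [integral_undef hint]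

lemma gaussianPDFReal_neg_le {μ : ℝ} (hμ : 0 ≤ μ) (v : NNReal) {x : ℝ} (hx : 0 ≤ x) :
    gaussianPDFReal μ v (-x) ≤ gaussianPDFReal μ v x := by
  simp only [gaussianPDFReal]
  gcongr _ * Real.exp (?_ / _)
  nlinarith

lemma integral_gaussianReal_nonneg_of_odd {f : ℝ → ℝ} (hodd : f.Odd)
    (hnonneg : ∀ x, 0 ≤ x → 0 ≤ f x) {μ : ℝ} (hμ : 0 ≤ μ) (v : NNReal) :
    0 ≤ ∫ x, f x ∂gaussianReal μ v := by
  rcases eq_or_ne v 0 with rfl | hv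
  · simpa [gaussianReal_zero_var] using hnonneg μ hμ
  rw [integral_gaussianReal_eq_integral_smul hv]
  refine integral_nonneg_of_forall_add_comp_neg_nonneg fun x ↦ ?_
  simp only [smul_eq_mul]
  have hpair : ∀ y, 0 ≤ y →
      0 ≤ gaussianPDFReal μ v y * f y + gaussianPDFReal μ v (-y) * f (-y) := fun y hy ↦ by
    rw [hodd.eq]
    nlinarith [gaussianPDFReal_neg_le hμ v hy, hnonneg y hy]
  rcases le_total 0 x with hx | hx
  · exact hpair x hx
  · simpa only [neg_neg, add_comm] using hpair (-x) (neg_nonneg.2 hx)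

theorem gaussian_phi_phi'_nonneg_general (φ : ℝ → ℝ)
    (hmono : StrictMono φ)
    (hodd : ∀ y, φ (-y) = -φ y)
    (μ : ℝ) (hμ : 0 ≤ μ) (v : NNReal) :
    0 ≤ ∫ z, φ (z + μ) * deriv φ (z + μ) ∂(gaussianReal 0 v) := by
  set f : ℝ → ℝ := fun y ↦ φ y * deriv φ y
  have hf_odd : f.Odd := Function.Odd.mul_even (f := φ) hodd (Function.Odd.deriv_even hodd)
  have hf_nonneg : ∀ y, 0 ≤ y → 0 ≤ f y := fun y hy ↦
    mul_nonneg (by simpa [Function.Odd.map_zero hodd] using hmono.monotone hy)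
      hmono.monotone.deriv_nonneg
  have hshift := (measurableEmbedding_addRight μ).integral_map (μ := gaussianReal 0 v) f
  rw [gaussianReal_map_add_const, zero_add] at hshift
  exact hshift ▸ integral_gaussianReal_nonneg_of_odd hf_odd hf_nonneg hμ v

theorem gaussian_phi_phi'_nonneg (φ : ℝ → ℝ)
    (hbdd : ∃ C, ∀ y, |φ y| ≤ C) (hmono : StrictMono φ)
    (hodd : ∀ y, φ (-y) = -φ y) (hC2 : ContDiff ℝ 2 φ)
    (hconc : ∀ y : ℝ, 0 < y → iteratedDeriv 2 φ y < 0)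
    (μ : ℝ) (hμ : 0 ≤ μ) (v : NNReal) :
    0 ≤ ∫ z, φ (z + μ) * deriv φ (z + μ) ∂(gaussianReal 0 v) :=
  gaussian_phi_phi'_nonneg_general φ hmono hodd μ hμ v
end

section
/- Let 0 < u < 1 and suppose μ(β) > u for all β > β_u, where μ(β) = E tanh(βμ(β)+h) is the Curie–Weiss maximizer. Define δ_u(β) = f(μ(β),β) − f(u,β), where f(μ,β) = ln 2 + E ln cosh(βμ+h) − βμ²/2. If μ ↦ E tanh(βμ+h) is strictly increasing in μ, then d/dβ δ_u(β) ≥ (μ(β)−u)²/2 > 0 for β > β_u; in particular δ_u is strictly increasing on (β_u,∞). -/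
open MeasureTheory

theorem delta_u_strictly_increasing
    {Ω : Type*} [MeasureSpace Ω] [IsProbabilityMeasure (volume : Measure Ω)]
    (h : Ω → ℝ) (hmeas : Measurable h) (hcent : ∫ ω, h ω = 0)
    (L : ℝ → ℝ) (hLdef : ∀ x : ℝ, L x = ∫ ω, Real.log (Real.cosh (x + h ω)))
    (hL : ∀ x : ℝ, HasDerivAt L (∫ ω, Real.tanh (x + h ω)) x)
    (μ μ' : ℝ → ℝ) (hμ : ∀ b : ℝ, HasDerivAt μ (μ' b) b)
    (hfix : ∀ b : ℝ, ∫ ω, Real.tanh (b * μ b + h ω) = μ b)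
    (f : ℝ → ℝ → ℝ)
    (hf : ∀ m b : ℝ, f m b = Real.log 2 + L (b * m) - b * m ^ 2 / 2)
    (u : ℝ) (hu0 : 0 < u) (hu1 : u < 1) (βu : ℝ)
    (hμu : ∀ b : ℝ, βu < b → u < μ b)
    (hTmono : ∀ b : ℝ, βu < b →
      StrictMono (fun m : ℝ => ∫ ω, Real.tanh (b * m + h ω))) :
    (∀ b : ℝ, βu < b → ∃ dd : ℝ,
      HasDerivAt (fun b' => f (μ b') b' - f u b') dd b ∧
      (μ b - u) ^ 2 / 2 ≤ dd ∧ 0 < dd) ∧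
    StrictMonoOn (fun b => f (μ b) b - f u b) (Set.Ioi βu) := by
  have key : ∀ b : ℝ, βu < b → ∃ dd : ℝ,
      HasDerivAt (fun b' => f (μ b') b' - f u b') dd b ∧
      (μ b - u) ^ 2 / 2 ≤ dd ∧ 0 < dd := by
    intro b hb
    set T := ∫ ω, Real.tanh (b * u + h ω) with hT
    have hTlt : T < μ b := by
      have := hTmono b hb (hμu b hb)
      simpa [hfix b] using this
    refine ⟨μ b ^ 2 / 2 - (u * T - u ^ 2 / 2), ?_, ?_, ?_⟩
    · have h1 : HasDerivAt (fun b' => b' * μ b') (1 * μ b + b * μ' b) b :=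
        (hasDerivAt_id' (x := b)).mul (hμ b)
      have h2 : HasDerivAt (fun b' => L (b' * μ b'))
          ((∫ ω, Real.tanh (b * μ b + h ω)) * (1 * μ b + b * μ' b)) b :=
        (hL (b * μ b)).comp b h1
      rw [hfix b] at h2
      have h3 : HasDerivAt (fun b' => b' * μ b' ^ 2 / 2)
          ((1 * μ b ^ 2 + b * ((2 : ℕ) * μ b ^ 1 * μ' b)) / 2) b :=
        ((hasDerivAt_id' (x := b)).mul ((hμ b).pow 2)).div_const 2
      have h5 : HasDerivAt (fun b' : ℝ => b' * u) (1 * u) b :=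
        (hasDerivAt_id' (x := b)).mul_const u
      have h6 : HasDerivAt (fun b' => L (b' * u)) (T * (1 * u)) b :=
        (hL (b * u)).comp b h5
      have h7 : HasDerivAt (fun b' : ℝ => b' * u ^ 2 / 2) (1 * u ^ 2 / 2) b :=
        ((hasDerivAt_id' (x := b)).mul_const (u ^ 2)).div_const 2
      have hD : HasDerivAt (fun b' => (Real.log 2 + L (b' * μ b') - b' * μ b' ^ 2 / 2)
            - (Real.log 2 + L (b' * u) - b' * u ^ 2 / 2))
          ((μ b * (1 * μ b + b * μ' b) - (1 * μ b ^ 2 + b * ((2 : ℕ) * μ b ^ 1 * μ' b)) / 2)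
            - (T * (1 * u) - 1 * u ^ 2 / 2)) b :=
        ((h2.const_add (Real.log 2)).sub h3).sub ((h6.const_add (Real.log 2)).sub h7)
      have heq : (μ b * (1 * μ b + b * μ' b)
            - (1 * μ b ^ 2 + b * ((2 : ℕ) * μ b ^ 1 * μ' b)) / 2)
            - (T * (1 * u) - 1 * u ^ 2 / 2) = μ b ^ 2 / 2 - (u * T - u ^ 2 / 2) := by
        push_cast; ring
      rw [heq] at hD
      simpa only [hf] using hD
    · nlinarith [mul_lt_mul_of_pos_left hTlt hu0]
    · have hlt := hμu b hb
      nlinarith [mul_lt_mul_of_pos_left hTlt hu0]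
  refine ⟨key, ?_⟩
  apply strictMonoOn_of_deriv_pos (convex_Ioi βu)
  · intro x hx
    exact ((key x hx).choose_spec.1).continuousAt.continuousWithinAt
  · intro x hx
    rw [interior_Ioi] at hx
    obtain ⟨dd, hd, _, hpos⟩ := key x hx
    rw [hd.deriv]
    exact hpos
end

section
/- Let ν and ρ be probability measures such that under ν the array (Q_{ℓ,ℓ'})_{ℓ≠ℓ'} is exchangeable with each Q_{ℓ,ℓ'} distributed as ρ, and suppose the Ghirlanda–Guerra-type identity E[1_{Q_{ℓ,n+1} ∉ A}·F] = (1/n)ρ(Aᶜ)E[F] + (1/n)Σ_{ℓ'≤n, ℓ'≠ℓ} E[1_{Q_{ℓ,ℓ'} ∉ A}·F] holds for all measurable A ⊆ [0,1] and all bounded measurable functions F of (Q_{ℓ,ℓ'})_{ℓ≠ℓ'≤n}. Then for every measurable A and every n ≥ 2, ν(Q_{ℓ,ℓ'} ∈ A for all ℓ ≠ ℓ' ≤ n) ≥ ρ(A)^n. -/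
/-!
Let `Aₙ` be the event that all overlaps among the first `n` replicas lie in `A`. If
`ω ∈ Aₙ \ Aₙ₊₁`, then by symmetry some overlap `Q ℓ n` with `ℓ < n` falls outside `A`. Applying the
Ghirlanda–Guerra identity to `F = 1_{Aₙ}`, all the terms `1_{Q ℓ ℓ' ∉ A} F` with `ℓ, ℓ' < n` vanish,
so each of these `n` events has probability `ρ(Aᶜ) μ(Aₙ) / n`. Hence
`μ(Aₙ₊₁) ≥ μ(Aₙ) - ρ(Aᶜ) μ(Aₙ) = ρ(A) μ(Aₙ)`, and induction from `A₁ = Ω` gives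
`μ(Aₙ₊₁) ≥ ρ(A)ⁿ`.
-/

open MeasureTheory Finset

section

variable {Ω : Type*}

def SatisfiesGhirlandaGuerra [MeasurableSpace Ω] (μ : Measure Ω) (Q : ℕ → ℕ → Ω → ℝ)
    (ρ : Measure ℝ) : Prop :=
  ∀ n : ℕ, 1 ≤ n → ∀ ℓ, ℓ < n → ∀ A : Set ℝ, MeasurableSet A →
    ∀ F : Ω → ℝ, Measurable F → (∃ C, ∀ ω, |F ω| ≤ C) →
    (∃ G : (ℕ → ℕ → ℝ) → ℝ,
      F = fun ω => G (fun i j => if i < n ∧ j < n then Q i j ω else 0)) →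
    ∫ ω, Set.indicator Aᶜ (fun _ => (1 : ℝ)) (Q ℓ n ω) * F ω ∂μ =
      (1 / n) * (ρ Aᶜ).toReal * (∫ ω, F ω ∂μ) +
      (1 / n) * ∑ ℓ' ∈ range n, (if ℓ' = ℓ then 0 else
        ∫ ω, Set.indicator Aᶜ (fun _ => (1 : ℝ)) (Q ℓ ℓ' ω) * F ω ∂μ)

def overlapEvent (Q : ℕ → ℕ → Ω → ℝ) (A : Set ℝ) (n : ℕ) : Set Ω :=
  {ω | ∀ ℓ, ℓ < n → ∀ ℓ', ℓ' < n → ℓ ≠ ℓ' → Q ℓ ℓ' ω ∈ A}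

variable {Q : ℕ → ℕ → Ω → ℝ} {A : Set ℝ}

theorem overlapEvent_one : overlapEvent Q A 1 = Set.univ := by
  ext ω
  simp only [overlapEvent, Set.mem_ofPred_eq, Set.mem_univ, iff_true]
  omega

theorem indicator_overlapEvent_eq_comp_restrict (n : ℕ) :
    ∃ G : (ℕ → ℕ → ℝ) → ℝ, (overlapEvent Q A n).indicator 1 =
      fun ω => G (fun i j => if i < n ∧ j < n then Q i j ω else 0) := by
  classical
  refine ⟨fun q => if ∀ ℓ, ℓ < n → ∀ ℓ', ℓ' < n → ℓ ≠ ℓ' → q ℓ ℓ' ∈ A then 1 else 0,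
    funext fun ω => ?_⟩
  have hrestrict : (∀ ℓ, ℓ < n → ∀ ℓ', ℓ' < n → ℓ ≠ ℓ' →
      (if ℓ < n ∧ ℓ' < n then Q ℓ ℓ' ω else 0) ∈ A) ↔ ω ∈ overlapEvent Q A n := by
    simp +contextual [overlapEvent]
  simp only [Set.indicator_apply, hrestrict, Pi.one_apply]

theorem overlapEvent_subset_succ_union (hsymm : ∀ ℓ ℓ', Q ℓ ℓ' = Q ℓ' ℓ) (n : ℕ) :
    overlapEvent Q A n ⊆
      overlapEvent Q A (n + 1) ∪ ⋃ ℓ ∈ range n, Q ℓ n ⁻¹' Aᶜ ∩ overlapEvent Q A n := by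
  intro ω hω
  by_cases hnew : ∀ ℓ, ℓ < n → Q ℓ n ω ∈ A
  · left
    intro ℓ hℓ ℓ' hℓ' hne
    rcases Nat.lt_succ_iff_lt_or_eq.mp hℓ with hℓn | rfl <;>
      rcases Nat.lt_succ_iff_lt_or_eq.mp hℓ' with hℓ'n | rfl
    · exact hω ℓ hℓn ℓ' hℓ'n hne
    · exact hnew ℓ hℓn
    · rw [hsymm]; exact hnew ℓ' hℓ'n
    · exact absurd rfl hne
  · push Not at hnew
    obtain ⟨ℓ, hℓ, hout⟩ := hnew
    exact Or.inr (Set.mem_biUnion (mem_range.mpr hℓ) ⟨hout, hω⟩)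

theorem indicator_compl_mul_indicator_overlapEvent (ℓ ℓ' n : ℕ) (ω : Ω) :
    Aᶜ.indicator (fun _ => (1 : ℝ)) (Q ℓ ℓ' ω) * (overlapEvent Q A n).indicator 1 ω =
      (Q ℓ ℓ' ⁻¹' Aᶜ ∩ overlapEvent Q A n).indicator 1 ω := by
  rw [Set.inter_indicator_one, ← Set.indicator_comp_right]
  rfl

theorem preimage_compl_inter_overlapEvent_eq_empty {ℓ ℓ' n : ℕ} (hℓ : ℓ < n) (hℓ' : ℓ' < n)
    (hne : ℓ ≠ ℓ') :
    Q ℓ ℓ' ⁻¹' Aᶜ ∩ overlapEvent Q A n = ∅ :=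
  Set.eq_empty_of_forall_notMem fun _ ⟨hout, hω⟩ => hout (hω ℓ hℓ ℓ' hℓ' hne)

variable [MeasurableSpace Ω] {μ : Measure Ω} {ρ : Measure ℝ}

theorem measurableSet_overlapEvent (hQ : ∀ ℓ ℓ', Measurable (Q ℓ ℓ')) (hA : MeasurableSet A)
    (n : ℕ) :
    MeasurableSet (overlapEvent Q A n) := by
  have : overlapEvent Q A n =
      ⋂ ℓ ∈ range n, ⋂ ℓ' ∈ range n, ⋂ (_ : ℓ ≠ ℓ'), Q ℓ ℓ' ⁻¹' A := by
    ext ω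
    simp [overlapEvent]
  rw [this]
  exact .biInter (Set.to_countable _) fun ℓ _ => .biInter (Set.to_countable _) fun ℓ' _ =>
    .iInter fun _ => hQ ℓ ℓ' hA

theorem SatisfiesGhirlandaGuerra.measureReal_compl_inter_overlapEvent
    (hGG : SatisfiesGhirlandaGuerra μ Q ρ) (hQ : ∀ ℓ ℓ', Measurable (Q ℓ ℓ'))
    (hA : MeasurableSet A) {n ℓ : ℕ} (hn : 1 ≤ n) (hℓ : ℓ < n) :
    μ.real (Q ℓ n ⁻¹' Aᶜ ∩ overlapEvent Q A n) =
      1 / n * ρ.real Aᶜ * μ.real (overlapEvent Q A n) := by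
  have hS := measurableSet_overlapEvent hQ hA n
  have key := hGG n hn ℓ hℓ A hA _ (measurable_one.indicator hS)
    ⟨1, fun ω => by by_cases h : ω ∈ overlapEvent Q A n <;> simp [h]⟩
    (indicator_overlapEvent_eq_comp_restrict n)
  have hcross : ∀ ℓ' ∈ range n, (if ℓ' = ℓ then 0 else
      ∫ ω, Aᶜ.indicator (fun _ => (1 : ℝ)) (Q ℓ ℓ' ω) *
        (overlapEvent Q A n).indicator 1 ω ∂μ) = 0 := by
    intro ℓ' hℓ'
    split_ifs with heq
    · rfl
    · simp only [indicator_compl_mul_indicator_overlapEvent,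
        preimage_compl_inter_overlapEvent_eq_empty hℓ (mem_range.mp hℓ') (Ne.symm heq),
        Set.indicator_empty, integral_zero]
  rw [sum_eq_zero hcross, mul_zero, add_zero] at key
  simp only [indicator_compl_mul_indicator_overlapEvent,
    integral_indicator_one ((hQ ℓ n hA.compl).inter hS), integral_indicator_one hS] at key
  exact key

theorem SatisfiesGhirlandaGuerra.mul_measureReal_overlapEvent_le
    [IsProbabilityMeasure μ] [IsProbabilityMeasure ρ]
    (hGG : SatisfiesGhirlandaGuerra μ Q ρ) (hQ : ∀ ℓ ℓ', Measurable (Q ℓ ℓ'))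
    (hsymm : ∀ ℓ ℓ', Q ℓ ℓ' = Q ℓ' ℓ) (hA : MeasurableSet A) {n : ℕ} (hn : 1 ≤ n) :
    ρ.real A * μ.real (overlapEvent Q A n) ≤ μ.real (overlapEvent Q A (n + 1)) := by
  have hexits : ∑ ℓ ∈ range n, μ.real (Q ℓ n ⁻¹' Aᶜ ∩ overlapEvent Q A n) =
      ρ.real Aᶜ * μ.real (overlapEvent Q A n) := by
    rw [sum_congr rfl fun ℓ hℓ =>
      hGG.measureReal_compl_inter_overlapEvent hQ hA hn (mem_range.mp hℓ),
      sum_const, card_range, nsmul_eq_mul]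
    field_simp
  have hcover : μ.real (overlapEvent Q A n) ≤ μ.real (overlapEvent Q A (n + 1)) +
      ∑ ℓ ∈ range n, μ.real (Q ℓ n ⁻¹' Aᶜ ∩ overlapEvent Q A n) :=
    (measureReal_mono (overlapEvent_subset_succ_union hsymm n)).trans <|
      (measureReal_union_le _ _).trans <| add_le_add le_rfl (measureReal_biUnion_finset_le _ _)
  rw [hexits, probReal_compl_eq_one_sub hA] at hcover
  linarith

theorem SatisfiesGhirlandaGuerra.pow_le_measure_overlapEvent
    [IsProbabilityMeasure μ] [IsProbabilityMeasure ρ]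
    (hGG : SatisfiesGhirlandaGuerra μ Q ρ) (hQ : ∀ ℓ ℓ', Measurable (Q ℓ ℓ'))
    (hsymm : ∀ ℓ ℓ', Q ℓ ℓ' = Q ℓ' ℓ) (hA : MeasurableSet A) (n : ℕ) :
    ρ A ^ n ≤ μ (overlapEvent Q A (n + 1)) := by
  induction n with
  | zero => simp [overlapEvent_one]
  | succ n ih =>
    have hstep : ρ A * μ (overlapEvent Q A (n + 1)) ≤ μ (overlapEvent Q A (n + 2)) := by
      rw [← ENNReal.toReal_le_toReal (by finiteness) (by finiteness), ENNReal.toReal_mul]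
      exact hGG.mul_measureReal_overlapEvent_le hQ hsymm hA (by omega)
    calc ρ A ^ (n + 1) = ρ A * ρ A ^ n := pow_succ' _ _
      _ ≤ ρ A * μ (overlapEvent Q A (n + 1)) := by gcongr
      _ ≤ μ (overlapEvent Q A (n + 2)) := hstep

end

theorem GG_identity_lower_bound_general
    {Ω : Type*} [MeasureSpace Ω] [IsProbabilityMeasure (volume : Measure Ω)]
    (Q : ℕ → ℕ → Ω → ℝ) (hmeas : ∀ ℓ ℓ', Measurable (Q ℓ ℓ'))
    (hsymm : ∀ ℓ ℓ', Q ℓ ℓ' = Q ℓ' ℓ)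
    (ρ : Measure ℝ) [IsProbabilityMeasure ρ]
    (hGG : ∀ n : ℕ, 1 ≤ n → ∀ ℓ, ℓ < n → ∀ A : Set ℝ, MeasurableSet A →
      ∀ F : Ω → ℝ, Measurable F → (∃ C, ∀ ω, |F ω| ≤ C) →
      (∃ G : (ℕ → ℕ → ℝ) → ℝ,
        F = fun ω => G (fun i j => if i < n ∧ j < n then Q i j ω else 0)) →
      ∫ ω, Set.indicator Aᶜ (fun _ => (1 : ℝ)) (Q ℓ n ω) * F ω =
        (1 / n) * (ρ Aᶜ).toReal * (∫ ω, F ω) +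
        (1 / n) * ∑ ℓ' ∈ Finset.range n, (if ℓ' = ℓ then 0 else
          ∫ ω, Set.indicator Aᶜ (fun _ => (1 : ℝ)) (Q ℓ ℓ' ω) * F ω)) :
    ∀ A : Set ℝ, MeasurableSet A → ∀ n : ℕ, 2 ≤ n →
      (ρ A) ^ n ≤ volume {ω | ∀ ℓ, ℓ < n → ∀ ℓ', ℓ' < n → ℓ ≠ ℓ' → Q ℓ ℓ' ω ∈ A} := by
  intro A hA n hn
  obtain ⟨m, rfl⟩ : ∃ m, n = m + 1 := ⟨n - 1, by omega⟩
  calc ρ A ^ (m + 1) ≤ ρ A ^ m := pow_le_pow_right_of_le_one' prob_le_one m.le_succ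
    _ ≤ volume (overlapEvent Q A (m + 1)) :=
      SatisfiesGhirlandaGuerra.pow_le_measure_overlapEvent hGG hmeas hsymm hA m

theorem GG_identity_lower_bound
    {Ω : Type*} [MeasureSpace Ω] [IsProbabilityMeasure (volume : Measure Ω)]
    (Q : ℕ → ℕ → Ω → ℝ) (hmeas : ∀ ℓ ℓ', Measurable (Q ℓ ℓ'))
    (hrange : ∀ ℓ ℓ' ω, Q ℓ ℓ' ω ∈ Set.Icc (0 : ℝ) 1)
    (hsymm : ∀ ℓ ℓ', Q ℓ ℓ' = Q ℓ' ℓ)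
    (ρ : Measure ℝ) [IsProbabilityMeasure ρ]
    (hmarg : ∀ ℓ ℓ', ℓ ≠ ℓ' → Measure.map (Q ℓ ℓ') volume = ρ)
    (hGG : ∀ n : ℕ, 1 ≤ n → ∀ ℓ, ℓ < n → ∀ A : Set ℝ, MeasurableSet A →
      ∀ F : Ω → ℝ, Measurable F → (∃ C, ∀ ω, |F ω| ≤ C) →
      (∃ G : (ℕ → ℕ → ℝ) → ℝ,
        F = fun ω => G (fun i j => if i < n ∧ j < n then Q i j ω else 0)) →
      ∫ ω, Set.indicator Aᶜ (fun _ => (1 : ℝ)) (Q ℓ n ω) * F ω =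
        (1 / n) * (ρ Aᶜ).toReal * (∫ ω, F ω) +
        (1 / n) * ∑ ℓ' ∈ Finset.range n, (if ℓ' = ℓ then 0 else
          ∫ ω, Set.indicator Aᶜ (fun _ => (1 : ℝ)) (Q ℓ ℓ' ω) * F ω)) :
    ∀ A : Set ℝ, MeasurableSet A → ∀ n : ℕ, 2 ≤ n →
      (ρ A) ^ n ≤ volume {ω | ∀ ℓ, ℓ < n → ∀ ℓ', ℓ' < n → ℓ ≠ ℓ' → Q ℓ ℓ' ω ∈ A} :=
  GG_identity_lower_bound_general Q hmeas hsymm ρ hGG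
end
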